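/- arXiv:1907.09113 — 5 statements merged into one kernel-verified Lean document; each statement's English description precedes it below -/
import Mathlib

section
/- No quota rule preserves being a defeat graph. That is, for every quota q ∈ [0,1] there exist a number of agents n, a value-based argumentation framework VAF = ⟨A, →, V, val⟩, and a profile ⟨AF_1, …, AF_n⟩ such that each AF_i is a defeat graph of the VAF induced by some audience, yet the output of the quota rule with quota q on this profile is not the defeat graph of the VAF induced by any audience. (Witness: A = {a_1, …, a_n} with 1/n < q, attack relation forming the directed cycle a_1 → a_2 → … → a_n → a_1, val(a_i) = v_i all distinct, and agent i's defeat graph containing exactly the single attack a_i → a_{i+1} (indices mod n); the quota rule outputs the empty attack relation, which no audience induces.) -/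
/-!
Place the arguments on a directed cycle `a₀ → a₁ → ⋯ → aₙ → a₀` with pairwise distinct
values, and let agent `i` rank the values cyclically so that its defeat graph keeps exactly
the attack `aᵢ → aᵢ₊₁`. Every attack then has exactly one supporter, so a quota rule outputs
all pairs (threshold `0`, including loops, which are not attacks), the whole cycle
(threshold `1`) or nothing (threshold `≥ 2`). The last two would need an audience preferring
every value on the cycle to its successor, resp. to its predecessor, which a strict order
cannot do. Two agents therefore suffice for every quota.
-/

/-- An audience is a strict linear order on values: irreflexive, transitive and
complete (any two distinct values are comparable). -/
def IsAudience {V : Type} (P : V → V → Prop) : Prop :=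
  (∀ v, ¬ P v v) ∧ (∀ u v w, P u v → P v w → P u w) ∧ (∀ v w, v ≠ w → P v w ∨ P w v)

/-- Given a VAF with attack relation `att` and value labelling `val`, and an audience `P`,
argument `a` defeats `b` iff `a` attacks `b` and `val b` is not preferred to `val a`.
`defeats att val P` is the defeat graph induced by `P`. -/
def defeats {A V : Type} (att : A → A → Prop) (val : A → V) (P : V → V → Prop) :
    A → A → Prop :=
  fun a b => att a b ∧ ¬ P (val b) (val a)

lemma rel_iterate_succ_of_trans {V : Type} {r : V → V → Prop} {f : V → V}
    (hr : ∀ u v w, r u v → r v w → r u w) (hf : ∀ v, r (f v) v) (k : ℕ) (v : V) :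
    r (f^[k + 1] v) v := by
  induction k with
  | zero => exact hf v
  | succ k ih =>
    rw [Function.iterate_succ_apply']
    exact hr _ _ _ (hf _) ih

namespace IsAudience

variable {V : Type} {P : V → V → Prop}

lemma swap (hP : IsAudience P) : IsAudience (flip P) :=
  ⟨hP.1, fun _ _ _ huv hvw => hP.2.1 _ _ _ hvw huv, fun v w hvw => hP.2.2 w v hvw.symm⟩

lemma not_forall_rel_of_isPeriodicPt {f : V → V} {k : ℕ} {v : V} (hP : IsAudience P)
    (hk : 0 < k) (hv : Function.IsPeriodicPt f k v) : ¬ ∀ u, P (f u) u := by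
  intro hf
  obtain ⟨j, rfl⟩ := Nat.exists_eq_succ_of_ne_zero hk.ne'
  have hvv := rel_iterate_succ_of_trans hP.2.1 hf j v
  rw [hv.eq] at hvv
  exact hP.1 v hvv

open Fin.CommRing in
lemma not_forall_rel_add_one {n : ℕ} {P : Fin (n + 1) → Fin (n + 1) → Prop}
    (hP : IsAudience P) : ¬ ∀ a, P (a + 1) a :=
  hP.not_forall_rel_of_isPeriodicPt (Nat.succ_pos n) (v := 0) <| by
    simp [Function.IsPeriodicPt, Function.IsFixedPt, add_right_iterate_apply]

end IsAudience

lemma isAudience_of_injective {V α : Type} [LinearOrder α] {f : V → α}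
    (hf : Function.Injective f) : IsAudience (fun u v => f v < f u) :=
  ⟨fun _ => lt_irrefl _, fun _ _ _ huv hvw => hvw.trans huv,
    fun _ _ hvw => lt_or_gt_of_ne (hf.ne hvw.symm)⟩

lemma Fin.val_add_one_le_iff {n : ℕ} {x : Fin (n + 1)} :
    (x + 1).val ≤ x.val ↔ x = Fin.last n := by
  rw [Fin.val_add_one]
  split_ifs with h <;> simp [h]

def cycleAttack (n : ℕ) (a b : Fin (n + 1)) : Prop := b = a + 1

def cycleProfile (n : ℕ) (i a b : Fin (n + 1)) : Prop := b = a + 1 ∧ a = i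

/-- Agent `i` ranks the values cyclically, from `i + 1` at the bottom up to `i` at the top,
so that `i → i + 1` is the only attack of the cycle it lets through. -/
def cycleAudience {n : ℕ} (i u v : Fin (n + 1)) : Prop :=
  (v - (i + 1)).val < (u - (i + 1)).val

lemma isAudience_cycleAudience {n : ℕ} (i : Fin (n + 1)) : IsAudience (cycleAudience i) :=
  isAudience_of_injective (Fin.val_injective.comp (sub_left_injective (b := i + 1)))

lemma defeats_cycleAudience {n : ℕ} (i : Fin (n + 1)) :
    defeats (cycleAttack n) id (cycleAudience i) = cycleProfile n i := by
  ext a b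
  simp only [defeats, cycleAttack, cycleProfile, cycleAudience, id, not_lt]
  refine and_congr_right fun hb => ?_
  rw [hb, show a + 1 - (i + 1) = a - (i + 1) + 1 by abel, Fin.val_add_one_le_iff,
    ← add_left_inj 1, Fin.last_add_one, show a - (i + 1) + 1 = a - i by abel, sub_eq_zero]

lemma card_cycleProfile {n : ℕ} (a b : Fin (n + 1)) :
    Nat.card {i // cycleProfile n i a b} = if b = a + 1 then 1 else 0 := by
  split_ifs with hb <;> simp [cycleProfile, hb]

lemma quota_cycleProfile_ne_defeats {n : ℕ} (hn : n ≠ 0) (t : ℕ)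
    {P : Fin (n + 1) → Fin (n + 1) → Prop} (hP : IsAudience P) :
    (fun a b => t ≤ Nat.card {i // cycleProfile n i a b}) ≠ defeats (cycleAttack n) id P := by
  intro h
  have hout (a b) : (t ≤ if b = a + 1 then 1 else 0) ↔ b = a + 1 ∧ ¬ P b a := by
    rw [← card_cycleProfile]; exact Iff.of_eq (congrFun₂ h a b)
  have hsucc (a : Fin (n + 1)) : a ≠ a + 1 := by simpa [eq_comm] using hn
  match t with
  | 0 => exact hsucc 0 ((hout 0 0).1 (Nat.zero_le _)).1
  | 1 =>
    refine hP.swap.not_forall_rel_add_one fun a => ?_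
    have hnot := ((hout a (a + 1)).1 (by simp)).2
    exact (hP.2.2 _ _ (hsucc a).symm).resolve_left hnot
  | t + 2 =>
    refine hP.not_forall_rel_add_one fun a => ?_
    by_contra hnot
    exact absurd ((hout a (a + 1)).2 ⟨rfl, hnot⟩) (by simp)

/-- No quota rule preserves being a defeat graph: for every quota
`q ∈ [0,1]` there are `n` agents, a VAF `⟨A, att, V, val⟩` and a profile of defeat
graphs of that VAF such that the quota rule's output (accepting an edge iff at least
`⌊q·n⌋` agents have it) is not the defeat graph induced by any audience. -/
theorem quota_rules_do_not_preserve_defeat_graphs :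
    ∀ q : ℝ, 0 ≤ q → q ≤ 1 →
      ∃ (n : ℕ) (A : Type) (_ : Fintype A) (V : Type) (att : A → A → Prop) (val : A → V)
        (AF : Fin n → A → A → Prop),
        (∀ i, ∃ P : V → V → Prop, IsAudience P ∧ AF i = defeats att val P) ∧
        ¬ ∃ P : V → V → Prop, IsAudience P ∧
            (fun a b => ⌊q * (n : ℝ)⌋₊ ≤ Nat.card {i : Fin n // AF i a b})
              = defeats att val P := by
  intro q _ _
  refine ⟨2, Fin 2, inferInstance, Fin 2, cycleAttack 1, id, cycleProfile 1,
    fun i => ⟨cycleAudience i, isAudience_cycleAudience i, (defeats_cycleAudience i).symm⟩, ?_⟩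
  rintro ⟨P, hP, hquota⟩
  exact quota_cycleProfile_ne_defeats one_ne_zero _ hP hquota
end

section
/- A graph aggregation rule F on profiles of n argumentation frameworks over a fixed set of arguments A is anonymous, monotonic, and independent if and only if F is a quota rule, i.e., for every ordered pair of arguments (a,b) there is a threshold t_{a→b} ∈ {0, 1, …, n+1} such that for every profile AF, a → b ∈ F(AF) iff |N^{a→b}_{AF}| ≥ t_{a→b}. -/
/-!
Independence makes the decision on an edge `a → b` a function of its coalition
`N^{a→b}` alone, anonymity makes it a function of the coalition's size, and monotonicity
makes that function upward closed: a permutation of the agents moves any coalition into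
every coalition that is at least as large. An upward closed predicate on `{0, …, n}` is a
threshold, with threshold `n + 1` when it never holds.
-/

theorem Equiv.Perm.exists_forall_imp_comp_of_card_le {ι : Type*} [Finite ι] {p q : ι → Prop}
    (h : Nat.card {i // p i} ≤ Nat.card {i // q i}) :
    ∃ π : Equiv.Perm ι, ∀ i, p i → q (π i) := by
  classical
  have := Fintype.ofFinite ι
  simp only [Nat.card_eq_fintype_card] at h
  obtain ⟨f⟩ := Function.Embedding.nonempty_of_card_le h
  obtain ⟨π, hπ⟩ := Equiv.Perm.exists_extending_pair (Subtype.val : {i // p i} → ι)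
    (fun i => (f i : ι)) Subtype.val_injective (Subtype.val_injective.comp f.injective)
  exact ⟨π, fun i hi => hπ ⟨i, hi⟩ ▸ (f ⟨i, hi⟩).2⟩

theorem exists_threshold_of_forall_le_imp {X : Type*} (size : X → ℕ) (N : ℕ)
    (hsize : ∀ x, size x ≤ N) (G : X → Prop)
    (hG : ∀ x y, size x ≤ size y → G x → G y) :
    ∃ t ≤ N + 1, ∀ x, G x ↔ t ≤ size x := by
  classical
  have hex : ∃ k, k = N + 1 ∨ ∃ x, G x ∧ size x = k := ⟨N + 1, Or.inl rfl⟩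
  refine ⟨Nat.find hex, Nat.find_min' hex (Or.inl rfl),
    fun y => ⟨fun hy => ?_, fun hle => ?_⟩⟩
  · exact Nat.find_min' hex (Or.inr ⟨y, hy, rfl⟩)
  · rcases Nat.find_spec hex with htop | ⟨x, hx, hsx⟩
    · have := hsize y
      omega
    · exact hG x y (hsx ▸ hle) hx

theorem exists_threshold_of_perm_invariant_of_monotone {ι : Type*} [Finite ι]
    (G : (ι → Prop) → Prop)
    (hanon : ∀ p (π : Equiv.Perm ι), G p ↔ G (fun i => p (π i)))
    (hmono : ∀ p q : ι → Prop, (∀ i, p i → q i) → G p → G q) :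
    ∃ t ≤ Nat.card ι + 1, ∀ p, G p ↔ t ≤ Nat.card {i // p i} := by
  refine exists_threshold_of_forall_le_imp _ _ (fun p => Finite.card_subtype_le p) G
    fun p q hpq hp => ?_
  obtain ⟨π, hπ⟩ := Equiv.Perm.exists_forall_imp_comp_of_card_le hpq
  exact (hanon q π).2 (hmono p _ hπ hp)

namespace GraphAggregation

variable {A ι : Type*}

def Anonymous (F : (ι → A → A → Prop) → A → A → Prop) : Prop :=
  ∀ (AF : ι → A → A → Prop) (π : Equiv.Perm ι) (a b : A),
    F AF a b ↔ F (fun i => AF (π i)) a b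

def Monotonic (F : (ι → A → A → Prop) → A → A → Prop) : Prop :=
  ∀ (AF AF' : ι → A → A → Prop) (a b : A),
    F AF a b →
    (∀ i, AF i a b → AF' i a b) →
    (∀ c d, ¬(c = a ∧ d = b) → ∀ i, AF' i c d ↔ AF i c d) →
    F AF' a b

def Independent (F : (ι → A → A → Prop) → A → A → Prop) : Prop :=
  ∀ (AF AF' : ι → A → A → Prop) (a b : A),
    {i : ι | AF i a b} = {i : ι | AF' i a b} → (F AF a b ↔ F AF' a b)

def IsQuotaRule (F : (ι → A → A → Prop) → A → A → Prop) (t : A → A → ℕ) : Prop :=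
  ∀ (AF : ι → A → A → Prop) (a b : A),
    F AF a b ↔ t a b ≤ Nat.card {i // AF i a b}

def edgeRule (F : (ι → A → A → Prop) → A → A → Prop) (a b : A) (p : ι → Prop) :
    Prop :=
  F (fun i _ _ => p i) a b

variable {F : (ι → A → A → Prop) → A → A → Prop}

theorem Independent.iff_edgeRule (hF : Independent F) (AF : ι → A → A → Prop) (a b : A) :
    F AF a b ↔ edgeRule F a b (fun i => AF i a b) :=
  hF _ _ a b rfl

theorem Monotonic.edgeRule_mono (hmono : Monotonic F) (hindep : Independent F) (a b : A)
    {p q : ι → Prop} (hpq : ∀ i, p i → q i) (hp : edgeRule F a b p) : edgeRule F a b q := by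
  -- raise the coalition of `a → b` from `p` to `q`, leaving every other edge at `p`
  let AF' : ι → A → A → Prop := fun i c d => p i ∨ (c = a ∧ d = b ∧ q i)
  have hAF' : F AF' a b :=
    hmono _ AF' a b hp (fun i => Or.inl) fun c d hcd i => by simp only [AF']; tauto
  have hcoalition : (fun i => AF' i a b) = q :=
    funext fun i =>
      propext ⟨fun h => h.elim (hpq i) fun h => h.2.2, fun h => Or.inr ⟨rfl, rfl, h⟩⟩
  exact hcoalition ▸ (hindep.iff_edgeRule AF' a b).1 hAF'

theorem exists_isQuotaRule [Finite ι] (hanon : Anonymous F) (hmono : Monotonic F)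
    (hindep : Independent F) :
    ∃ t : A → A → ℕ, (∀ a b, t a b ≤ Nat.card ι + 1) ∧ IsQuotaRule F t := by
  have hedge (a b : A) :
      ∃ t ≤ Nat.card ι + 1, ∀ p, edgeRule F a b p ↔ t ≤ Nat.card {i // p i} :=
    exists_threshold_of_perm_invariant_of_monotone _ (fun p π => hanon _ π a b)
      fun _ _ => hmono.edgeRule_mono hindep a b
  choose t ht hquota using hedge
  exact ⟨t, ht, fun AF a b => (hindep.iff_edgeRule AF a b).trans (hquota a b _)⟩

namespace IsQuotaRule

variable {t : A → A → ℕ}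

theorem anonymous (hF : IsQuotaRule F t) : Anonymous F := by
  intro AF π a b
  rw [hF, hF, ← Nat.card_congr (π.subtypeEquiv fun _ => Iff.rfl)]

theorem monotonic [Finite ι] (hF : IsQuotaRule F t) : Monotonic F := by
  intro AF AF' a b hAF hsub _
  rw [hF] at hAF ⊢
  exact hAF.trans (Nat.card_mono (Set.toFinite _) hsub)

theorem independent (hF : IsQuotaRule F t) : Independent F := by
  intro AF AF' a b hcoalition
  rw [hF, hF]
  exact iff_of_eq (congrArg (fun s : Set ι => t a b ≤ Nat.card s) hcoalition)

end IsQuotaRule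

end GraphAggregation

theorem graph_rule_anonymous_monotonic_independent_iff_quota_general
    (A : Type) (n : ℕ)
    (F : (Fin n → A → A → Prop) → (A → A → Prop)) :
    ((∀ (AF : Fin n → A → A → Prop) (π : Equiv.Perm (Fin n)) (a b : A),
        F AF a b ↔ F (fun i => AF (π i)) a b) ∧
     (∀ (AF AF' : Fin n → A → A → Prop) (a b : A),
        F AF a b →
        (∀ i, AF i a b → AF' i a b) →
        (∀ c d, ¬(c = a ∧ d = b) → ∀ i, AF' i c d ↔ AF i c d) →
        F AF' a b) ∧
     (∀ (AF AF' : Fin n → A → A → Prop) (a b : A),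
        {i : Fin n | AF i a b} = {i : Fin n | AF' i a b} →
        (F AF a b ↔ F AF' a b)))
    ↔
    (∃ t : A → A → ℕ, (∀ a b, t a b ≤ n + 1) ∧
      ∀ (AF : Fin n → A → A → Prop) (a b : A),
        F AF a b ↔ t a b ≤ Nat.card {i : Fin n // AF i a b}) := by
  constructor
  · rintro ⟨hanon, hmono, hindep⟩
    obtain ⟨t, ht, hquota⟩ := GraphAggregation.exists_isQuotaRule hanon hmono hindep
    exact ⟨t, by simpa only [Nat.card_fin] using ht, hquota⟩
  · rintro ⟨t, -, hquota⟩
    exact ⟨GraphAggregation.IsQuotaRule.anonymous hquota,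
      GraphAggregation.IsQuotaRule.monotonic hquota,
      GraphAggregation.IsQuotaRule.independent hquota⟩

/-- Endriss–Grandi: a graph aggregation rule on profiles of `n`
argumentation frameworks over a fixed finite set of arguments `A` is anonymous,
monotonic and independent iff it is a quota rule, i.e. for each ordered pair `(a,b)`
there is a threshold `t a b ∈ {0,…,n+1}` such that the collective graph contains
`a → b` iff at least `t a b` agents include it. -/
theorem graph_rule_anonymous_monotonic_independent_iff_quota
    (A : Type) [Fintype A] (n : ℕ)
    (F : (Fin n → A → A → Prop) → (A → A → Prop)) :
    ((∀ (AF : Fin n → A → A → Prop) (π : Equiv.Perm (Fin n)) (a b : A),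
        F AF a b ↔ F (fun i => AF (π i)) a b) ∧
     (∀ (AF AF' : Fin n → A → A → Prop) (a b : A),
        F AF a b →
        (∀ i, AF i a b → AF' i a b) →
        (∀ c d, ¬(c = a ∧ d = b) → ∀ i, AF' i c d ↔ AF i c d) →
        F AF' a b) ∧
     (∀ (AF AF' : Fin n → A → A → Prop) (a b : A),
        {i : Fin n | AF i a b} = {i : Fin n | AF' i a b} →
        (F AF a b ↔ F AF' a b)))
    ↔
    (∃ t : A → A → ℕ, (∀ a b, t a b ≤ n + 1) ∧
      ∀ (AF : Fin n → A → A → Prop) (a b : A),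
        F AF a b ↔ t a b ≤ Nat.card {i : Fin n // AF i a b}) :=
  graph_rule_anonymous_monotonic_independent_iff_quota_general A n F
end

section
/- Any graph aggregation rule that preserves being a defeat graph violates anonymity, monotonicity, or independence. That is, there is no graph aggregation rule that is simultaneously anonymous, monotonic, independent, and such that for every VAF and every profile all of whose members are defeat graphs of that VAF (each induced by some audience), its output is also a defeat graph of that VAF. -/
/-- A graph aggregation rule is anonymous: its output is invariant under
permutations of the agents. -/
def AnonymousGA {A : Type} {n : ℕ} (F : (Fin n → A → A → Prop) → (A → A → Prop)) : Prop :=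
  ∀ (AF : Fin n → A → A → Prop) (π : Equiv.Perm (Fin n)) (a b : A),
    F AF a b ↔ F (fun i => AF (π i)) a b

/-- A graph aggregation rule is monotonic: if `a → b` is collectively accepted and the
profile changes only by additional agents including `a → b`, it is still accepted. -/
def MonotonicGA {A : Type} {n : ℕ} (F : (Fin n → A → A → Prop) → (A → A → Prop)) : Prop :=
  ∀ (AF AF' : Fin n → A → A → Prop) (a b : A),
    F AF a b →
    (∀ i, AF i a b → AF' i a b) →
    (∀ c d, ¬(c = a ∧ d = b) → ∀ i, AF' i c d ↔ AF i c d) →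
    F AF' a b

/-- A graph aggregation rule is independent: acceptance of `a → b` depends only on the
set of agents including `a → b`. -/
def IndependentGA {A : Type} {n : ℕ} (F : (Fin n → A → A → Prop) → (A → A → Prop)) : Prop :=
  ∀ (AF AF' : Fin n → A → A → Prop) (a b : A),
    {i : Fin n | AF i a b} = {i : Fin n | AF' i a b} →
    (F AF a b ↔ F AF' a b)

/-!
Take two agents and the value-based framework `a → b → c` in which only `b` carries the value
`true`. The profile in which agent `0` holds just `a → b` and agent `1` just `b → c` consists of
defeat graphs (for the two audiences on `Bool`), while every defeat graph of this framework keeps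
exactly one of the two attacks. By independence and anonymity, whether the rule accepts an attack
backed by a single agent depends only on the attack, so accepting `a → b` this way is equivalent to
rejecting `b → c`. Around the odd cycle `0 → 1 → 2 → 0` this gives a contradiction.
-/

section Audience

variable {V : Type} {P : V → V → Prop}

theorem isAudience_lt [LinearOrder V] : IsAudience (fun u v : V => u < v) :=
  ⟨lt_irrefl, fun _ _ _ => lt_trans, fun _ _ => Ne.lt_or_gt⟩

theorem isAudience_gt [LinearOrder V] : IsAudience (fun u v : V => v < u) :=
  ⟨lt_irrefl, fun _ _ _ huv hvw => lt_trans hvw huv, fun _ _ h => h.lt_or_gt.symm⟩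

theorem IsAudience.not_iff_of_ne (hP : IsAudience P) {v w : V} (hvw : v ≠ w) :
    ¬ P v w ↔ P w v :=
  ⟨fun h => (hP.2.2 v w hvw).resolve_left h,
    fun hwv hvw' => hP.1 v (hP.2.1 v w v hvw' hwv)⟩

end Audience

section Aggregation

variable {A : Type} {n : ℕ}

def PreservesDefeatGraphs (F : (Fin n → A → A → Prop) → A → A → Prop) : Prop :=
  ∀ (V : Type) (att : A → A → Prop) (val : A → V) (AF : Fin n → A → A → Prop),
    (∀ i, ∃ P : V → V → Prop, IsAudience P ∧ AF i = defeats att val P) →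
    ∃ P : V → V → Prop, IsAudience P ∧ F AF = defeats att val P

def singleEdge (a b : A) : A → A → Prop := fun u v => u = a ∧ v = b

def AcceptsAlone [NeZero n] (F : (Fin n → A → A → Prop) → A → A → Prop) (a b : A) : Prop :=
  F (fun i => if i = 0 then singleEdge a b else fun _ _ => False) a b

theorem IndependentGA.iff_acceptsAlone [NeZero n] {F : (Fin n → A → A → Prop) → A → A → Prop}
    (hInd : IndependentGA F) {AF : Fin n → A → A → Prop} {a b : A}
    (hAF : ∀ i, AF i a b ↔ i = 0) : F AF a b ↔ AcceptsAlone F a b := by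
  refine hInd _ _ a b (Set.ext fun i => ?_)
  by_cases hi : i = 0 <;> simp [hAF, hi, singleEdge]

theorem iff_acceptsAlone_of_anonymous {F : (Fin 2 → A → A → Prop) → A → A → Prop}
    (hAnon : AnonymousGA F) (hInd : IndependentGA F) {AF : Fin 2 → A → A → Prop} {a b : A}
    (hAF : ∀ i, AF i a b ↔ i = 1) : F AF a b ↔ AcceptsAlone F a b := by
  rw [hAnon AF (Equiv.swap 0 1)]
  refine hInd.iff_acceptsAlone fun i => ?_
  rw [hAF, Equiv.swap_apply_eq_iff, Equiv.swap_apply_right]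

end Aggregation

section Chain

variable {A : Type} {a b c : A}

def chainAttack (a b c : A) : A → A → Prop := fun u v => singleEdge a b u v ∨ singleEdge b c u v

def chainProfile (a b c : A) : Fin 2 → A → A → Prop := ![singleEdge a b, singleEdge b c]

theorem defeats_chainAttack_apply_left [DecidableEq A] (hab : a ≠ b) (P : Bool → Bool → Prop) :
    defeats (chainAttack a b c) (fun u => decide (u = b)) P a b ↔ ¬ P true false := by
  simp [defeats, chainAttack, singleEdge, hab]

theorem defeats_chainAttack_apply_right [DecidableEq A] (hbc : b ≠ c) (P : Bool → Bool → Prop) :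
    defeats (chainAttack a b c) (fun u => decide (u = b)) P b c ↔ ¬ P false true := by
  simp [defeats, chainAttack, singleEdge, hbc.symm]

theorem defeats_chainAttack_lt [DecidableEq A] (hbc : b ≠ c) :
    defeats (chainAttack a b c) (fun u => decide (u = b)) (· < ·) = singleEdge a b := by
  funext u v
  simp only [defeats, chainAttack, singleEdge, Bool.lt_iff, decide_eq_false_iff_not,
    decide_eq_true_eq]
  grind

theorem defeats_chainAttack_gt [DecidableEq A] (hab : a ≠ b) :
    defeats (chainAttack a b c) (fun u => decide (u = b)) (fun u v => v < u) = singleEdge b c := by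
  funext u v
  simp only [defeats, chainAttack, singleEdge, Bool.lt_iff, decide_eq_false_iff_not,
    decide_eq_true_eq]
  grind

theorem acceptsAlone_iff_not_acceptsAlone {F : (Fin 2 → A → A → Prop) → A → A → Prop}
    (hAnon : AnonymousGA F) (hInd : IndependentGA F) (hPres : PreservesDefeatGraphs F)
    (hab : a ≠ b) (hbc : b ≠ c) : AcceptsAlone F a b ↔ ¬ AcceptsAlone F b c := by
  classical
  have hProfile : ∀ i, ∃ P : Bool → Bool → Prop, IsAudience P ∧
      chainProfile a b c i = defeats (chainAttack a b c) (fun u => decide (u = b)) P := by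
    intro i
    fin_cases i
    · exact ⟨_, isAudience_lt, (defeats_chainAttack_lt hbc).symm⟩
    · exact ⟨_, isAudience_gt, (defeats_chainAttack_gt hab).symm⟩
  obtain ⟨P, hP, hF⟩ := hPres _ _ _ _ hProfile
  have hFab : F (chainProfile a b c) a b ↔ AcceptsAlone F a b :=
    hInd.iff_acceptsAlone fun i => by fin_cases i <;> simp [chainProfile, singleEdge, hab]
  have hFbc : F (chainProfile a b c) b c ↔ AcceptsAlone F b c :=
    iff_acceptsAlone_of_anonymous hAnon hInd fun i => by
      fin_cases i <;> simp [chainProfile, singleEdge, hab.symm]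
  rw [← hFab, ← hFbc, hF, defeats_chainAttack_apply_left hab,
    defeats_chainAttack_apply_right hbc, not_not]
  exact hP.not_iff_of_ne (by decide)

theorem not_preservesDefeatGraphs {F : (Fin 2 → A → A → Prop) → A → A → Prop}
    (hAnon : AnonymousGA F) (hInd : IndependentGA F) (hab : a ≠ b) (hbc : b ≠ c) (hca : c ≠ a) :
    ¬ PreservesDefeatGraphs F := fun hPres => by
  have h₁ := acceptsAlone_iff_not_acceptsAlone hAnon hInd hPres hab hbc
  have h₂ := acceptsAlone_iff_not_acceptsAlone hAnon hInd hPres hbc hca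
  have h₃ := acceptsAlone_iff_not_acceptsAlone hAnon hInd hPres hca hab
  tauto

end Chain

/-- there is no (family of) graph aggregation rule(s) that is anonymous,
monotonic, independent, and preserves being a defeat graph: whenever all graphs in the
input profile are defeat graphs of a given VAF (each induced by some audience), the
output is also a defeat graph of that VAF induced by some audience. -/
theorem no_anonymous_monotonic_independent_rule_preserves_defeat_graphs :
    ¬ ∃ F : ∀ (A : Type) (n : ℕ), (Fin n → A → A → Prop) → (A → A → Prop),
        (∀ (A : Type) (n : ℕ), AnonymousGA (F A n)) ∧
        (∀ (A : Type) (n : ℕ), MonotonicGA (F A n)) ∧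
        (∀ (A : Type) (n : ℕ), IndependentGA (F A n)) ∧
        (∀ (A : Type) (n : ℕ) (V : Type) (att : A → A → Prop) (val : A → V)
            (AF : Fin n → A → A → Prop),
            (∀ i, ∃ P : V → V → Prop, IsAudience P ∧ AF i = defeats att val P) →
            ∃ P : V → V → Prop, IsAudience P ∧ F A n AF = defeats att val P) := by
  rintro ⟨F, hAnon, -, hInd, hPres⟩
  exact not_preservesDefeatGraphs (hAnon (Fin 3) 2) (hInd _ _) (a := 0) (b := 1) (c := 2)
    (by decide) (by decide) (by decide) (hPres _ _)
end

section
/- (Arrow's impossibility theorem for strict linear orders.) Let V be a set of alternatives with |V| ≥ 3 and let F be a preference aggregation rule mapping profiles of n strict linear orders on V to a strict linear order on V. If F is unanimous (whenever all agents rank v above w, so does F's output) and independent (the relative ranking of any pair v, w in the output depends only on the set of agents ranking v above w), then F is dictatorial: there is an agent i such that F(P) = P_i for every profile P. -/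
/-!
Call a coalition `S` decisive for `(x, y)` if `x` beats `y` in `F P` whenever exactly the agents
of `S` rank `x` above `y`; by independence a single such profile decides it. Since `F P` is
linear, `S` is not decisive for `(x, y)` iff `Sᶜ` is decisive for `(y, x)`; since it is
transitive, a profile on three alternatives shows that coalitions decisive for `(x, y)` and
`(y, z)` meet in one decisive for `(x, z)`. Combined with unanimity (`univ` is decisive) and a
third alternative, decisiveness does not depend on the pair, and the decisive coalitions form
an ultrafilter on the agents. On a finite set of agents it is principal; its generator is the
dictator.
-/

variable {V : Type} {ι : Type*}

namespace IsAudience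

variable {R : V → V → Prop} {a b : V}

theorem asymm (hR : IsAudience R) (h : R a b) : ¬ R b a :=
  fun h' => hR.1 a (hR.2.1 a b a h h')

theorem not_rel_iff (hR : IsAudience R) (hab : a ≠ b) : ¬ R a b ↔ R b a :=
  ⟨(hR.2.2 a b hab).resolve_left, hR.asymm⟩

end IsAudience

theorem exists_isAudience (V : Type) : ∃ R : V → V → Prop, IsAudience R :=
  ⟨WellOrderingRel, irrefl, fun _ _ _ => _root_.trans,
    fun _ _ hvw => (trichotomous_of WellOrderingRel _ _).imp_right (·.resolve_left hvw)⟩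

def rankLex (r : V → ℕ) (R : V → V → Prop) : V → V → Prop :=
  fun a b => r a < r b ∨ r a = r b ∧ R a b

theorem IsAudience.rankLex {R : V → V → Prop} (hR : IsAudience R) (r : V → ℕ) :
    IsAudience (rankLex r R) := by
  refine ⟨fun v => ?_, fun u v w => ?_, fun v w hvw => ?_⟩
  · rintro (h | ⟨-, h⟩)
    exacts [lt_irrefl _ h, hR.1 v h]
  · rintro (h₁ | ⟨e₁, h₁⟩) (h₂ | ⟨e₂, h₂⟩)
    · exact .inl (h₁.trans h₂)
    · exact .inl (e₂ ▸ h₁)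
    · exact .inl (e₁ ▸ h₂)
    · exact .inr ⟨e₁.trans e₂, hR.2.1 u v w h₁ h₂⟩
  · rcases lt_trichotomy (r v) (r w) with h | h | h
    · exact .inl (.inl h)
    · exact (hR.2.2 v w hvw).imp (.inr ⟨h, ·⟩) (.inr ⟨h.symm, ·⟩)
    · exact .inr (.inl h)

theorem exists_profile_setOf_eq {x y : V} (hxy : x ≠ y) (S : Set ι) :
    ∃ P : ι → V → V → Prop, (∀ i, IsAudience (P i)) ∧ {i | P i x y} = S := by
  classical
  obtain ⟨R, hR⟩ := exists_isAudience V
  -- `l.idxOf` ranks the members of `l` in order and everything else at `l.length`, so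
  -- `rankLex (l.idxOf ·) R` puts `l` on top
  refine ⟨fun i => rankLex ((if i ∈ S then [x] else [y]).idxOf ·) R, fun i => hR.rankLex _, ?_⟩
  ext i
  by_cases hi : i ∈ S <;> simp [hi, rankLex, hxy, hxy.symm]

theorem exists_profile_setOf_eq₃ {x y z : V} (hxy : x ≠ y) (hxz : x ≠ z) (hyz : y ≠ z)
    (S T : Set ι) :
    ∃ P : ι → V → V → Prop, (∀ i, IsAudience (P i)) ∧
      {i | P i x y} = S ∧ {i | P i y z} = T ∧ {i | P i x z} = S ∩ T := by
  classical
  obtain ⟨R, hR⟩ := exists_isAudience V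
  let top (i : ι) : List V :=
    if i ∈ S then (if i ∈ T then [x, y, z] else [z, x, y])
    else (if i ∈ T then [y, z, x] else [z, y, x])
  refine ⟨fun i => rankLex ((top i).idxOf ·) R, fun i => hR.rankLex _, ?_, ?_, ?_⟩ <;>
  · ext i
    by_cases hS : i ∈ S <;> by_cases hT : i ∈ T <;>
      simp [top, hS, hT, rankLex, hxy, hxz, hyz, hxy.symm, hxz.symm, hyz.symm]

theorem exists_ne_and_ne {v₁ v₂ v₃ : V} (h₁₂ : v₁ ≠ v₂) (h₁₃ : v₁ ≠ v₃) (h₂₃ : v₂ ≠ v₃)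
    (a b : V) : ∃ c, c ≠ a ∧ c ≠ b := by
  by_contra! h
  rcases eq_or_ne v₁ a with rfl | h₁
  · exact h₂₃ ((h v₂ h₁₂.symm).trans (h v₃ h₁₃.symm).symm)
  rcases eq_or_ne v₂ a with rfl | h₂
  · exact h₁₃ ((h v₁ h₁).trans (h v₃ h₂₃.symm).symm)
  · exact h₁₂ ((h v₁ h₁).trans (h v₂ h₂).symm)

section Decisive

variable {F : (ι → V → V → Prop) → V → V → Prop}

def PreservesAudiences (F : (ι → V → V → Prop) → V → V → Prop) : Prop :=
  ∀ P : ι → V → V → Prop, (∀ i, IsAudience (P i)) → IsAudience (F P)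

def IsUnanimous (F : (ι → V → V → Prop) → V → V → Prop) : Prop :=
  ∀ P : ι → V → V → Prop, (∀ i, IsAudience (P i)) → ∀ v w, (∀ i, P i v w) → F P v w

def IsIndependent (F : (ι → V → V → Prop) → V → V → Prop) : Prop :=
  ∀ P P' : ι → V → V → Prop, (∀ i, IsAudience (P i)) → (∀ i, IsAudience (P' i)) →
    ∀ v w, {i | P i v w} = {i | P' i v w} → (F P v w ↔ F P' v w)

def IsDecisive (F : (ι → V → V → Prop) → V → V → Prop) (x y : V) (S : Set ι) : Prop :=
  ∀ P : ι → V → V → Prop, (∀ i, IsAudience (P i)) → {i | P i x y} = S → F P x y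

variable {x y z a b c d : V} {S T : Set ι}

theorem IsUnanimous.isDecisive_univ (hU : IsUnanimous F) (x y : V) :
    IsDecisive F x y Set.univ :=
  fun P hP hS => hU P hP x y fun i => (Set.ext_iff.1 hS i).2 trivial

theorem IsIndependent.isDecisive_iff (hI : IsIndependent F) {P : ι → V → V → Prop}
    (hP : ∀ i, IsAudience (P i)) (hS : {i | P i x y} = S) : IsDecisive F x y S ↔ F P x y :=
  ⟨fun h => h P hP hS, fun h P' hP' hS' => (hI P P' hP hP' x y (hS.trans hS'.symm)).1 h⟩

theorem not_isDecisive_iff (hF : PreservesAudiences F) (hI : IsIndependent F) (hxy : x ≠ y) :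
    ¬ IsDecisive F x y S ↔ IsDecisive F y x Sᶜ := by
  obtain ⟨P, hP, hS⟩ := exists_profile_setOf_eq hxy S
  have hSc : {i | P i y x} = Sᶜ := by
    rw [← hS]
    ext i
    exact ((hP i).not_rel_iff hxy).symm
  rw [hI.isDecisive_iff hP hS, hI.isDecisive_iff hP hSc]
  exact (hF P hP).not_rel_iff hxy

theorem not_isDecisive_empty (hF : PreservesAudiences F) (hU : IsUnanimous F)
    (hI : IsIndependent F) (hxy : x ≠ y) : ¬ IsDecisive F x y ∅ := by
  rw [not_isDecisive_iff hF hI hxy, Set.compl_empty]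
  exact hU.isDecisive_univ y x

theorem IsDecisive.trans_inter (hF : PreservesAudiences F) (hI : IsIndependent F)
    (hxy : x ≠ y) (hxz : x ≠ z) (hyz : y ≠ z)
    (hS : IsDecisive F x y S) (hT : IsDecisive F y z T) : IsDecisive F x z (S ∩ T) := by
  obtain ⟨P, hP, hPS, hPT, hPST⟩ := exists_profile_setOf_eq₃ hxy hxz hyz S T
  exact (hI.isDecisive_iff hP hPST).2 <| (hF P hP).2.1 x y z (hS P hP hPS) (hT P hP hPT)

theorem IsDecisive.congr_left (hF : PreservesAudiences F) (hU : IsUnanimous F)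
    (hI : IsIndependent F) (hab : a ≠ b) (hcb : c ≠ b) (h : IsDecisive F a b S) :
    IsDecisive F c b S := by
  rcases eq_or_ne c a with rfl | hca
  · exact h
  simpa using (hU.isDecisive_univ c a).trans_inter hF hI hca hcb hab h

theorem IsDecisive.congr_right (hF : PreservesAudiences F) (hU : IsUnanimous F)
    (hI : IsIndependent F) (hab : a ≠ b) (hda : d ≠ a) (h : IsDecisive F a b S) :
    IsDecisive F a d S := by
  rcases eq_or_ne d b with rfl | hdb
  · exact h
  simpa using h.trans_inter hF hI hab hda.symm hdb.symm (hU.isDecisive_univ b d)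

theorem IsDecisive.transfer (hF : PreservesAudiences F) (hU : IsUnanimous F)
    (hI : IsIndependent F) (h₃ : ∀ a b : V, ∃ c, c ≠ a ∧ c ≠ b) (hab : a ≠ b) (hcd : c ≠ d)
    (h : IsDecisive F a b S) : IsDecisive F c d S := by
  rcases ne_or_eq c b with hcb | rfl
  · exact (h.congr_left hF hU hI hab hcb).congr_right hF hU hI hcb hcd.symm
  obtain ⟨e, hea, heb⟩ := h₃ a c
  have hae : IsDecisive F a e S := h.congr_right hF hU hI hab hea
  have hce : IsDecisive F c e S := hae.congr_left hF hU hI hea.symm heb.symm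
  exact hce.congr_right hF hU hI heb.symm hcd.symm

theorem IsDecisive.mono (hF : PreservesAudiences F) (hU : IsUnanimous F)
    (hI : IsIndependent F) (h₃ : ∀ a b : V, ∃ c, c ≠ a ∧ c ≠ b) (hxy : x ≠ y) (hST : S ⊆ T)
    (hS : IsDecisive F x y S) : IsDecisive F x y T := by
  by_contra hT
  obtain ⟨z, hzx, hzy⟩ := h₃ x y
  have hTc : IsDecisive F y z Tᶜ :=
    ((not_isDecisive_iff hF hI hxy).1 hT).congr_right hF hU hI hxy.symm hzy
  have hS_inter_Tc := hS.trans_inter hF hI hxy hzx.symm hzy.symm hTc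
  rw [(Set.disjoint_compl_right_iff_subset.2 hST).inter_eq] at hS_inter_Tc
  exact not_isDecisive_empty hF hU hI hzx.symm hS_inter_Tc

theorem IsDecisive.inter (hF : PreservesAudiences F) (hU : IsUnanimous F)
    (hI : IsIndependent F) (h₃ : ∀ a b : V, ∃ c, c ≠ a ∧ c ≠ b) (hxy : x ≠ y)
    (hS : IsDecisive F x y S) (hT : IsDecisive F x y T) : IsDecisive F x y (S ∩ T) := by
  obtain ⟨z, hzx, hzy⟩ := h₃ x y
  have hT' : IsDecisive F y z T := hT.transfer hF hU hI h₃ hxy hzy.symm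
  exact (hS.trans_inter hF hI hxy hzx.symm hzy.symm hT').transfer hF hU hI h₃ hzx.symm hxy

theorem isDecisive_congr (hF : PreservesAudiences F) (hU : IsUnanimous F)
    (hI : IsIndependent F) (h₃ : ∀ a b : V, ∃ c, c ≠ a ∧ c ≠ b) (hab : a ≠ b) (hcd : c ≠ d) :
    IsDecisive F a b S ↔ IsDecisive F c d S :=
  ⟨(·.transfer hF hU hI h₃ hab hcd), (·.transfer hF hU hI h₃ hcd hab)⟩

def decisiveUltrafilter (hF : PreservesAudiences F) (hU : IsUnanimous F)
    (hI : IsIndependent F) (h₃ : ∀ a b : V, ∃ c, c ≠ a ∧ c ≠ b) (hxy : x ≠ y) : Ultrafilter ι :=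
  .ofComplNotMemIff
    { sets := {S | IsDecisive F x y S}
      univ_sets := hU.isDecisive_univ x y
      sets_of_superset := fun hS hST => hS.mono hF hU hI h₃ hxy hST
      inter_sets := fun hS hT => hS.inter hF hU hI h₃ hxy hT }
    fun S => by
      show ¬ IsDecisive F x y Sᶜ ↔ IsDecisive F x y S
      rw [not_isDecisive_iff hF hI hxy, compl_compl]
      exact isDecisive_congr hF hU hI h₃ hxy.symm hxy

theorem exists_isDecisive_iff_mem [Finite ι] (hF : PreservesAudiences F) (hU : IsUnanimous F)
    (hI : IsIndependent F) (h₃ : ∀ a b : V, ∃ c, c ≠ a ∧ c ≠ b) (hxy : x ≠ y) :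
    ∃ i : ι, ∀ a b, a ≠ b → ∀ S, IsDecisive F a b S ↔ i ∈ S := by
  obtain ⟨i, hi⟩ := (decisiveUltrafilter hF hU hI h₃ hxy).eq_pure_of_finite
  refine ⟨i, fun a b hab S => ?_⟩
  rw [← Ultrafilter.mem_pure, ← hi]
  exact isDecisive_congr hF hU hI h₃ hab hxy

end Decisive

/-- Arrow's impossibility theorem for strict linear orders: with at
least 3 alternatives, any preference aggregation rule (mapping profiles of strict
linear orders to a strict linear order) that is unanimous and independent is
dictatorial. -/
theorem arrow_impossibility_strict_linear_orders
    (V : Type) (v₁ v₂ v₃ : V) (h₁₂ : v₁ ≠ v₂) (h₁₃ : v₁ ≠ v₃) (h₂₃ : v₂ ≠ v₃)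
    (n : ℕ)
    (F : (Fin n → V → V → Prop) → (V → V → Prop))
    (hF : ∀ P : Fin n → V → V → Prop, (∀ i, IsAudience (P i)) → IsAudience (F P))
    (hUnanimous : ∀ P : Fin n → V → V → Prop, (∀ i, IsAudience (P i)) →
      ∀ v w, (∀ i, P i v w) → F P v w)
    (hIndependent : ∀ P P' : Fin n → V → V → Prop,
      (∀ i, IsAudience (P i)) → (∀ i, IsAudience (P' i)) →
      ∀ v w, {i : Fin n | P i v w} = {i : Fin n | P' i v w} → (F P v w ↔ F P' v w)) :
    ∃ i : Fin n, ∀ P : Fin n → V → V → Prop, (∀ j, IsAudience (P j)) → F P = P i := by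
  obtain ⟨i, hi⟩ := exists_isDecisive_iff_mem hF hUnanimous hIndependent
    (exists_ne_and_ne h₁₂ h₁₃ h₂₃) h₁₂
  refine ⟨i, fun P hP => funext₂ fun a b => propext ?_⟩
  rcases eq_or_ne a b with rfl | hab
  · exact iff_of_false ((hF P hP).1 a) ((hP i).1 a)
  exact (IsIndependent.isDecisive_iff hIndependent hP rfl).symm.trans (hi a b hab _)
end

section
/- A preference aggregation rule F over a set V of values with |V| ≥ 2 is interpretation independent if and only if F is independent. -/
lemma IsAudience.not_rel_iff_s6 {V : Type} {P : V → V → Prop} (hP : IsAudience P) {u v : V}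
    (huv : u ≠ v) : ¬ P u v ↔ P v u :=
  ⟨(hP.2.2 u v huv).resolve_left, fun hvu h => hP.1 u (hP.2.1 u v u h hvu)⟩

lemma IsAudience.rel_iff_rel_swap {V : Type} {P Q : V → V → Prop} (hP : IsAudience P)
    (hQ : IsAudience Q) {u v : V} (huv : u ≠ v) (h : P u v ↔ Q u v) : P v u ↔ Q v u := by
  rw [← hP.not_rel_iff_s6 huv, ← hQ.not_rel_iff_s6 huv, h]

lemma defeats_eq_defeats_iff {A V : Type} {att : A → A → Prop} {val : A → V}
    {P Q : V → V → Prop} :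
    defeats att val P = defeats att val Q ↔
      ∀ a b, att a b → (P (val b) (val a) ↔ Q (val b) (val a)) := by
  simp only [funext_iff, eq_iff_iff, defeats, and_congr_right_iff, not_iff_not]

lemma defeats_mutualAttack_eq_iff {V : Type} {P Q : V → V → Prop} (hP : IsAudience P)
    (hQ : IsAudience Q) {v₁ v₂ : V} (hne : v₁ ≠ v₂) :
    defeats (fun _ _ : Bool => True) (fun b => cond b v₁ v₂) P =
        defeats (fun _ _ : Bool => True) (fun b => cond b v₁ v₂) Q ↔
      (P v₁ v₂ ↔ Q v₁ v₂) := by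
  rw [defeats_eq_defeats_iff]
  refine ⟨fun h => h false true trivial, fun h a b _ => ?_⟩
  cases a <;> cases b
  · exact iff_of_false (hP.1 v₂) (hQ.1 v₂)
  · exact h
  · exact hP.rel_iff_rel_swap hQ hne h
  · exact iff_of_false (hP.1 v₁) (hQ.1 v₁)

theorem interpretation_independent_iff_independent_general
    (V : Type) (n : ℕ)
    (F : (Fin n → V → V → Prop) → (V → V → Prop))
    (hF : ∀ P : Fin n → V → V → Prop, (∀ i, IsAudience (P i)) → IsAudience (F P)) :
    (∀ (A : Type) (att : A → A → Prop) (val : A → V) (P P' : Fin n → V → V → Prop),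
        (∀ i, IsAudience (P i)) → (∀ i, IsAudience (P' i)) →
        (∀ i, defeats att val (P i) = defeats att val (P' i)) →
        defeats att val (F P) = defeats att val (F P'))
    ↔
    (∀ P P' : Fin n → V → V → Prop,
        (∀ i, IsAudience (P i)) → (∀ i, IsAudience (P' i)) →
        ∀ v₁ v₂ : V, {i : Fin n | P i v₁ v₂} = {i : Fin n | P' i v₁ v₂} →
          (F P v₁ v₂ ↔ F P' v₁ v₂)) := by
  constructor
  · intro hII P P' hP hP' v₁ v₂ hcoalition
    rcases eq_or_ne v₁ v₂ with rfl | hne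
    · exact iff_of_false ((hF P hP).1 v₁) ((hF P' hP').1 v₁)
    rw [← defeats_mutualAttack_eq_iff (hF P hP) (hF P' hP') hne]
    exact hII _ _ _ P P' hP hP' fun i =>
      (defeats_mutualAttack_eq_iff (hP i) (hP' i) hne).2 (Set.ext_iff.1 hcoalition i)
  · intro hInd A att val P P' hP hP' hsame
    refine defeats_eq_defeats_iff.2 fun a b hab => hInd P P' hP hP' _ _ ?_
    exact Set.ext fun i => defeats_eq_defeats_iff.1 (hsame i) a b hab

/-- a preference aggregation rule over a set of values with at least two
elements is interpretation independent (for every VAF, any two profiles of audiences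
justifying the same profile of defeat graphs induce the same collective defeat graph)
iff it is independent (the collective ranking of a pair of values depends only on the
set of agents ranking the first above the second). -/
theorem interpretation_independent_iff_independent
    (V : Type) (v w : V) (hvw : v ≠ w) (n : ℕ)
    (F : (Fin n → V → V → Prop) → (V → V → Prop))
    (hF : ∀ P : Fin n → V → V → Prop, (∀ i, IsAudience (P i)) → IsAudience (F P)) :
    (∀ (A : Type) (att : A → A → Prop) (val : A → V) (P P' : Fin n → V → V → Prop),
        (∀ i, IsAudience (P i)) → (∀ i, IsAudience (P' i)) →
        (∀ i, defeats att val (P i) = defeats att val (P' i)) →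
        defeats att val (F P) = defeats att val (F P'))
    ↔
    (∀ P P' : Fin n → V → V → Prop,
        (∀ i, IsAudience (P i)) → (∀ i, IsAudience (P' i)) →
        ∀ v₁ v₂ : V, {i : Fin n | P i v₁ v₂} = {i : Fin n | P' i v₁ v₂} →
          (F P v₁ v₂ ↔ F P' v₁ v₂)) :=
  interpretation_independent_iff_independent_general V n F hF
end
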